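/- arXiv:1710.10865 — 2 statements merged into one kernel-verified Lean document; each statement's English description precedes it below -/
import Mathlib

section
/- Fix x ∈ (0,1) and c > 0, and for d ∈ ℕ let j_{d,x} = min{d, ⌊c d^x⌋}. If (a_j) is a positive sequence with ∑_{j=1}^d a_j ∼ c ln d as d → ∞, then (∑_{j=1}^{j_{d,x}} a_j)/(∑_{j=1}^d a_j) → x as d → ∞. -/
open Filter Finset Asymptotics Topology

/-!
Writing `j = ⌊c d^x⌋₊` (eventually `≤ d`), the ratio of partial sums is asymptotically equivalent
to `log j / log d`, since both partial sums are equivalent to `c log`; and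
`log j = log c + x log d + o(1)`, because `⌊y⌋₊ / y → 1`.
-/

lemma eventually_mul_rpow_le_self (c : ℝ) {x : ℝ} (hx : x < 1) :
    ∀ᶠ t : ℝ in atTop, c * t ^ x ≤ t := by
  filter_upwards [(tendsto_rpow_atTop (sub_pos.2 hx)).eventually_ge_atTop c,
    eventually_gt_atTop 0] with t hct ht
  calc c * t ^ x ≤ t ^ (1 - x) * t ^ x := by gcongr
    _ = t := by rw [← Real.rpow_add ht, sub_add_cancel, Real.rpow_one]

lemma tendsto_log_natFloor_sub_log :
    Tendsto (fun y : ℝ => Real.log ⌊y⌋₊ - Real.log y) atTop (𝓝 0) := by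
  have h := ((Real.continuousAt_log one_ne_zero).tendsto.comp
    (tendsto_nat_floor_div_atTop (R := ℝ)))
  rw [Real.log_one] at h
  refine h.congr' ?_
  filter_upwards [eventually_ge_atTop 1] with y hy
  have hfloor : (0 : ℝ) < ⌊y⌋₊ := by exact_mod_cast Nat.floor_pos.2 hy
  exact Real.log_div hfloor.ne' (by positivity)

lemma tendsto_log_natFloor_mul_rpow_div_log {c x : ℝ} (hc : 0 < c) (hx : 0 < x) :
    Tendsto (fun t : ℝ => Real.log ⌊c * t ^ x⌋₊ / Real.log t) atTop (𝓝 x) := by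
  have hpow : Tendsto (fun t : ℝ => c * t ^ x) atTop atTop :=
    (tendsto_rpow_atTop hx).const_mul_atTop hc
  have herr := (tendsto_log_natFloor_sub_log.comp hpow).add_const (Real.log c)
  have h := (herr.div_atTop Real.tendsto_log_atTop).add_const x
  rw [zero_add] at h
  refine h.congr' ?_
  filter_upwards [eventually_gt_atTop 1] with t ht
  have hlog : Real.log t ≠ 0 := (Real.log_pos ht).ne'
  simp only [Function.comp_apply]
  rw [Real.log_mul hc.ne' (by positivity), Real.log_rpow (by linarith)]
  field_simp
  ring

lemma Asymptotics.IsEquivalent.tendsto_comp_div {f g : ℕ → ℝ} {J : ℕ → ℕ} {x : ℝ}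
    (hfg : f ~[atTop] g) (hJ : Tendsto J atTop atTop)
    (hg : Tendsto (fun n => g (J n) / g n) atTop (𝓝 x)) :
    Tendsto (fun n => f (J n) / f n) atTop (𝓝 x) :=
  ((hfg.comp_tendsto hJ).div hfg).symm.tendsto_nhds hg

theorem stmt12_general (x c : ℝ) (hx : x ∈ Set.Ioo (0:ℝ) 1) (hc : 0 < c)
    (a : ℕ → ℝ)
    (hsum : Tendsto (fun d => (∑ j ∈ Finset.Icc 1 d, a j) / (c * Real.log d))
      atTop (nhds 1)) :
    Tendsto (fun d =>
        (∑ j ∈ Finset.Icc 1 (min d (Nat.floor (c * (d:ℝ) ^ x))), a j) /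
          (∑ j ∈ Finset.Icc 1 d, a j)) atTop (nhds x) := by
  have hmin : ∀ᶠ d : ℕ in atTop, min d ⌊c * (d:ℝ) ^ x⌋₊ = ⌊c * (d:ℝ) ^ x⌋₊ := by
    filter_upwards [tendsto_natCast_atTop_atTop.eventually
      (eventually_mul_rpow_le_self c hx.2)] with d hd
    exact min_eq_right (by simpa using Nat.floor_le_floor (R := ℝ) hd)
  have hJ : Tendsto (fun d : ℕ => min d ⌊c * (d:ℝ) ^ x⌋₊) atTop atTop :=
    (tendsto_nat_floor_atTop.comp ((tendsto_rpow_atTop hx.1).const_mul_atTop hc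
      |>.comp tendsto_natCast_atTop_atTop)).congr' (hmin.mono fun _ h => h.symm)
  refine (isEquivalent_of_tendsto_one hsum).tendsto_comp_div hJ ?_
  refine ((tendsto_log_natFloor_mul_rpow_div_log hc hx.1).comp
    tendsto_natCast_atTop_atTop).congr' ?_
  filter_upwards [hmin] with d hd
  simp only [Function.comp_apply, hd, mul_div_mul_left _ _ hc.ne']

theorem stmt12 (x c : ℝ) (hx : x ∈ Set.Ioo (0:ℝ) 1) (hc : 0 < c)
    (a : ℕ → ℝ) (hapos : ∀ j, 0 < a j)
    (hsum : Tendsto (fun d => (∑ j ∈ Finset.Icc 1 d, a j) / (c * Real.log d))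
      atTop (nhds 1)) :
    Tendsto (fun d =>
        (∑ j ∈ Finset.Icc 1 (min d (Nat.floor (c * (d:ℝ) ^ x))), a j) /
          (∑ j ∈ Finset.Icc 1 d, a j)) atTop (nhds x) :=
  stmt12_general x c hx hc a hsum
end

section
/- Fix x < 0 and τ ∈ (0,1), and for d ∈ ℕ let j_{d,x} = max{j ∈ ℕ : j ≤ d e^{x/τ}} (for d large enough that this set is nonempty). If a_j > 0 and ∑_{j=1}^d a_j ∼ C d^{1−τ} for some C > 0, then (∑_{j=1}^{j_{d,x}} a_j)/(∑_{j=1}^d a_j) → exp((1−τ)x/τ) as d → ∞. -/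
/-!
Write `S d = ∑_{j ≤ d} a_j` and `m d = ⌊d e^{x/τ}⌋`. Then
`S (m d) / S d = [S (m d) / (C (m d)^p)] / [S d / (C d^p)] · (m d / d)^p` with `p = 1 - τ`.
Both brackets tend to `1` because `m d → ∞`, and `m d / d → e^{x/τ}`, so the quotient tends to
`e^{(1-τ) x / τ}`.
-/

open Filter Topology

theorem tendsto_atTop_of_tendsto_natCast_div {m : ℕ → ℕ} {c : ℝ} (hc : 0 < c)
    (hm : Tendsto (fun d => (m d : ℝ) / d) atTop (𝓝 c)) : Tendsto m atTop atTop := by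
  refine (tendsto_natCast_atTop_iff (R := ℝ)).mp ?_
  refine (hm.pos_mul_atTop hc (tendsto_natCast_atTop_atTop (R := ℝ))).congr' ?_
  filter_upwards [eventually_ne_atTop 0] with d hd
  exact div_mul_cancel₀ _ (Nat.cast_ne_zero.mpr hd)

theorem tendsto_natFloor_natCast_mul_div {c : ℝ} (hc : 0 ≤ c) :
    Tendsto (fun d : ℕ => (⌊(d : ℝ) * c⌋₊ : ℝ) / d) atTop (𝓝 c) := by
  have h := (tendsto_nat_floor_mul_div_atTop hc).comp (tendsto_natCast_atTop_atTop (R := ℝ))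
  simp only [Function.comp_def, mul_comm c] at h
  exact h

theorem tendsto_div_comp_of_tendsto_div_rpow {S : ℕ → ℝ} {C p c : ℝ} {m : ℕ → ℕ}
    (hS : Tendsto (fun d => S d / (C * (d : ℝ) ^ p)) atTop (𝓝 1)) (hc : 0 < c)
    (hm : Tendsto (fun d => (m d : ℝ) / d) atTop (𝓝 c)) :
    Tendsto (fun d => S (m d) / S d) atTop (𝓝 (c ^ p)) := by
  have hSm := hS.comp (tendsto_atTop_of_tendsto_natCast_div hc hm)
  have hpow : Tendsto (fun d => ((m d : ℝ) / d) ^ p) atTop (𝓝 (c ^ p)) :=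
    hm.rpow_const (Or.inl hc.ne')
  have h := (hSm.div hS one_ne_zero).mul hpow
  rw [div_one, one_mul] at h
  refine h.congr' ?_
  -- the ratios `S d / (C d ^ p)` tend to `1`, so eventually none of their factors vanishes
  filter_upwards [hS.eventually_ne one_ne_zero, hSm.eventually_ne one_ne_zero]
    with d hd hmd
  simp only [Function.comp_apply, ne_eq, div_eq_zero_iff, mul_eq_zero, not_or] at hd hmd
  obtain ⟨hSd, hC, hdp⟩ := hd
  obtain ⟨-, -, hmp⟩ := hmd
  simp only [Pi.div_apply, Function.comp_apply,
    Real.div_rpow (Nat.cast_nonneg (m d)) (Nat.cast_nonneg d)]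
  field_simp

theorem stmt13_general (x τ : ℝ)
    (a : ℕ → ℝ) (C : ℝ)
    (hsum : Tendsto (fun d => (∑ j ∈ Finset.Icc 1 d, a j) / (C * (d:ℝ) ^ (1-τ)))
      atTop (nhds 1)) :
    Tendsto (fun d : ℕ =>
        (∑ j ∈ Finset.Icc 1 (Nat.floor ((d:ℝ) * Real.exp (x/τ))), a j) /
          (∑ j ∈ Finset.Icc 1 d, a j)) atTop (nhds (Real.exp ((1-τ)*x/τ))) := by
  have h := tendsto_div_comp_of_tendsto_div_rpow hsum (Real.exp_pos (x / τ))
    (tendsto_natFloor_natCast_mul_div (Real.exp_pos (x / τ)).le)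
  rwa [← Real.exp_mul, div_mul_eq_mul_div, mul_comm] at h

theorem stmt13 (x τ : ℝ) (hx : x < 0) (hτ : τ ∈ Set.Ioo (0:ℝ) 1)
    (a : ℕ → ℝ) (hapos : ∀ j, 0 < a j) (C : ℝ) (hC : 0 < C)
    (hsum : Tendsto (fun d => (∑ j ∈ Finset.Icc 1 d, a j) / (C * (d:ℝ) ^ (1-τ)))
      atTop (nhds 1)) :
    Tendsto (fun d : ℕ =>
        (∑ j ∈ Finset.Icc 1 (Nat.floor ((d:ℝ) * Real.exp (x/τ))), a j) /
          (∑ j ∈ Finset.Icc 1 d, a j)) atTop (nhds (Real.exp ((1-τ)*x/τ))) :=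
  stmt13_general x τ a C hsum
end
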